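/- arXiv:2412.11798 — 2 statements merged into one kernel-verified Lean document; each statement's English description precedes it below -/
import Mathlib

section
/- Let E ∈ V and E_h ∈ V_h, set e := E − E_h, and assume Galerkin orthogonality: b♯(e, v) = 0 for all v ∈ V_h^c. Then ω‖e − Π_K e‖_L ≤ γ_p |||e||| + γ_d |e|_nc. -/
/-!
Duality argument. Since `θ := e − Π_K e` is orthogonal to `K`, `‖θ‖² = (e, θ)`; with the adjoint
solution `ζ` for the datum `θ`, split `(e, θ) = b♯(e, ζ) + [(e, θ) − b♯(e, ζ)]`. By Galerkin
orthogonality `b♯(e, ζ) = b(e, ζ − v)` for every `v ∈ V_h^c`, so `ω b♯(e, ζ) ≤ |||e||| γ_p ‖θ‖`.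
The defect `w ↦ (w, θ) − b♯(w, ζ)` vanishes on `V`, so at `e = E − E_h` it is minus the defect at
`E_h`, which the adjoint consistency bounds by `γ_d ‖θ‖ |E_h|_nc / ω`; and `|E_h|_nc ≤ |e|_nc`
because `|E|_nc = 0`. Dividing by `‖θ‖` gives the claim.
-/

open scoped RealInnerProductSpace Pointwise

/-- The energy norm `|||v||| := (ω²‖v‖_L² + ‖C v‖_M²)^{1/2}`. -/
noncomputable def tnorm {L M : Type*} [NormedAddCommGroup L] [InnerProductSpace ℝ L]
    [NormedAddCommGroup M] [InnerProductSpace ℝ M]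
    (ω : ℝ) (C : L →ₗ[ℝ] M) (v : L) : ℝ :=
  Real.sqrt (ω ^ 2 * ‖v‖ ^ 2 + ‖C v‖ ^ 2)

lemma mul_add_mul_le_sqrt_mul_sqrt (a b c d : ℝ) :
    a * c + b * d ≤ √(a ^ 2 + b ^ 2) * √(c ^ 2 + d ^ 2) := by
  rw [← Real.sqrt_mul (by positivity)]
  exact Real.le_sqrt_of_sq_le (by nlinarith [sq_nonneg (a * d - b * c)])

lemma le_mul_csInf {S : Set ℝ} (hS : S.Nonempty) {c x : ℝ} (hc : 0 ≤ c)
    (h : ∀ t ∈ S, x ≤ c * t) : x ≤ c * sInf S := by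
  rw [← smul_eq_mul, ← Real.sInf_smul_of_nonneg hc]
  exact le_csInf hS.smul_set (by rintro _ ⟨t, ht, rfl⟩; exact h t ht)

lemma le_of_mul_sq_le_mul {a t X : ℝ} (ht : 0 ≤ t) (hX : 0 ≤ X) (h : a * t ^ 2 ≤ X * t) :
    a * t ≤ X := by
  rcases ht.eq_or_lt with rfl | ht
  · simpa using hX
  · exact le_of_mul_le_mul_right (by linarith) ht

lemma real_inner_sub_right_eq_norm_sq_of_inner_eq_zero {L : Type*} [NormedAddCommGroup L]
    [InnerProductSpace ℝ L] {x p : L} (h : ⟪x - p, p⟫ = 0) : ⟪x, x - p⟫ = ‖x - p‖ ^ 2 := by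
  rw [← real_inner_self_eq_norm_sq, ← sub_eq_zero, ← inner_sub_left, sub_sub_cancel,
    real_inner_comm, h]

section MaxwellForm

variable {L M : Type*} [NormedAddCommGroup L] [InnerProductSpace ℝ L]
  [NormedAddCommGroup M] [InnerProductSpace ℝ M] (ω : ℝ) (C : L →ₗ[ℝ] M)

def maxwellForm (v w : L) : ℝ := -ω ^ 2 * ⟪v, w⟫ + ⟪C v, C w⟫

lemma maxwellForm_sub_left (u v w : L) :
    maxwellForm ω C (u - v) w = maxwellForm ω C u w - maxwellForm ω C v w := by
  simp only [maxwellForm, map_sub, inner_sub_left]; ring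

lemma maxwellForm_sub_right (u v w : L) :
    maxwellForm ω C u (v - w) = maxwellForm ω C u v - maxwellForm ω C u w := by
  simp only [maxwellForm, map_sub, inner_sub_right]; ring

lemma tnorm_nonneg (v : L) : 0 ≤ tnorm ω C v := Real.sqrt_nonneg _

lemma maxwellForm_le_tnorm_mul_tnorm (u v : L) :
    maxwellForm ω C u v ≤ tnorm ω C u * tnorm ω C v := by
  have hL : -ω ^ 2 * ⟪u, v⟫ ≤ ω * ‖u‖ * (ω * ‖v‖) := by
    have := neg_le_of_abs_le (abs_real_inner_le_norm u v)
    nlinarith [sq_nonneg ω]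
  have hM : ⟪C u, C v⟫ ≤ ‖C u‖ * ‖C v‖ := real_inner_le_norm _ _
  have hCS := mul_add_mul_le_sqrt_mul_sqrt (ω * ‖u‖) ‖C u‖ (ω * ‖v‖) ‖C v‖
  simp only [mul_pow] at hCS
  exact (add_le_add hL hM).trans hCS

lemma mul_maxwellForm_le_tnorm_mul_sInf (hω : 0 ≤ ω) (W : Submodule ℝ L) {e : L}
    (horth : ∀ v ∈ W, maxwellForm ω C e v = 0) (ζ : L) :
    ω * maxwellForm ω C e ζ ≤
      tnorm ω C e * sInf {t : ℝ | ∃ v ∈ W, t = ω * tnorm ω C (ζ - v)} := by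
  refine le_mul_csInf ?_ (tnorm_nonneg ω C e) ?_
  · exact ⟨_, 0, W.zero_mem, rfl⟩
  rintro _ ⟨v, hv, rfl⟩
  calc ω * maxwellForm ω C e ζ = ω * maxwellForm ω C e (ζ - v) := by
        rw [maxwellForm_sub_right, horth v hv, sub_zero]
    _ ≤ ω * (tnorm ω C e * tnorm ω C (ζ - v)) :=
        mul_le_mul_of_nonneg_left (maxwellForm_le_tnorm_mul_tnorm ω C e _) hω
    _ = tnorm ω C e * (ω * tnorm ω C (ζ - v)) := by ring

end MaxwellForm
theorem bound_on_theta_zero_general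
    {L M : Type*} [NormedAddCommGroup L] [InnerProductSpace ℝ L]
    [NormedAddCommGroup M] [InnerProductSpace ℝ M]
    (ω : ℝ) (hω : 0 < ω)
    (V Vh : Submodule ℝ L)
    (C : L →ₗ[ℝ] M)
    (s : L →ₗ[ℝ] L →ₗ[ℝ] ℝ)
    (hs_conf : ∀ v w : L, v ∈ V ∨ w ∈ V → s v w = 0)
    (nc : L → ℝ)
    (hnc_add : ∀ v w : L, nc (v + w) ≤ nc v + nc w)
    (hnc_smul : ∀ (c : ℝ) (v : L), nc (c • v) = |c| * nc v)
    (hnc_conf : ∀ v ∈ V, nc v = 0)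
    (projK : L →ₗ[ℝ] L)
    (hprojK_mem : ∀ v : L, projK v ∈ V ∧ C (projK v) = 0)
    (hprojK_orth : ∀ v : L, ∀ w ∈ V, C w = 0 → ⟪v - projK v, w⟫ = 0)
    (γp γd : ℝ) (hγp : 0 ≤ γp) (hγd : 0 ≤ γd)
    (hadj : ∀ θ : L, (∀ w ∈ V, C w = 0 → ⟪θ, w⟫ = 0) →
      ∃ ζ ∈ V, (∀ w ∈ V, -ω ^ 2 * ⟪w, ζ⟫ + ⟪C w, C ζ⟫ = ⟪w, θ⟫) ∧
        sInf {t : ℝ | ∃ v ∈ Vh ⊓ V, t = ω * tnorm ω C (ζ - v)} ≤ γp * ‖θ‖ ∧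
        ∀ wh ∈ Vh,
          ω * |⟪wh, θ⟫ - (-ω ^ 2 * ⟪wh, ζ⟫ + ⟪C wh, C ζ⟫ + s wh ζ)| ≤
            γd * ‖θ‖ * nc wh)
    (E : L) (hE : E ∈ V) (Eh : L) (hEh : Eh ∈ Vh)
    (hGO : ∀ v ∈ Vh ⊓ V,
      -ω ^ 2 * ⟪E - Eh, v⟫ + ⟪C (E - Eh), C v⟫ + s (E - Eh) v = 0) :
    ω * ‖(E - Eh) - projK (E - Eh)‖ ≤
      γp * tnorm ω C (E - Eh) + γd * nc (E - Eh) := by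
  set e := E - Eh
  set θ := e - projK e
  let pnc : Seminorm ℝ L := .of nc hnc_add (by simpa only [Real.norm_eq_abs] using hnc_smul)
  obtain ⟨ζ, hζV, hζ_adj, hζ_approx, hζ_cons⟩ := hadj θ (hprojK_orth e)
  have hθ_sq : ⟪e, θ⟫ = ‖θ‖ ^ 2 := real_inner_sub_right_eq_norm_sq_of_inner_eq_zero <|
    hprojK_orth e _ (hprojK_mem e).1 (hprojK_mem e).2
  have h_primal : ω * maxwellForm ω C e ζ ≤ tnorm ω C e * (γp * ‖θ‖) := by
    refine (mul_maxwellForm_le_tnorm_mul_sInf ω C hω.le (Vh ⊓ V) (fun v hv => ?_) ζ).trans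
      (mul_le_mul_of_nonneg_left hζ_approx (tnorm_nonneg ω C e))
    have hGOv := hGO v hv
    rwa [hs_conf e v (.inr (Submodule.mem_inf.1 hv).2), add_zero] at hGOv
  have h_dual : ω * (⟪e, θ⟫ - maxwellForm ω C e ζ) ≤ γd * ‖θ‖ * nc e := by
    have h_defect : ⟪e, θ⟫ - maxwellForm ω C e ζ =
        -(⟪Eh, θ⟫ - (maxwellForm ω C Eh ζ + s Eh ζ)) := by
      rw [maxwellForm_sub_left, inner_sub_left, ← hζ_adj E hE, hs_conf Eh ζ (.inr hζV)]
      unfold maxwellForm; ring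
    have h_nc : nc Eh ≤ nc e := by
      calc nc Eh = nc (E - e) := by rw [sub_sub_cancel]
        _ ≤ nc E + nc e := map_sub_le_add pnc E e
        _ = nc e := by rw [hnc_conf E hE, zero_add]
    calc ω * (⟪e, θ⟫ - maxwellForm ω C e ζ)
        ≤ ω * |⟪Eh, θ⟫ - (maxwellForm ω C Eh ζ + s Eh ζ)| := by
          rw [h_defect]; exact mul_le_mul_of_nonneg_left (neg_le_abs _) hω.le
      _ ≤ γd * ‖θ‖ * nc Eh := hζ_cons Eh hEh
      _ ≤ γd * ‖θ‖ * nc e := by gcongr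
  have h_rhs : 0 ≤ γp * tnorm ω C e + γd * nc e :=
    add_nonneg (mul_nonneg hγp (tnorm_nonneg ω C e)) (mul_nonneg hγd (apply_nonneg pnc e))
  refine le_of_mul_sq_le_mul (norm_nonneg θ) h_rhs ?_
  rw [← hθ_sq]
  linarith

/-- **Bound on the `K`-orthogonal error component (duality argument).**
Under Galerkin orthogonality on conforming test functions,
`ω ‖e − Π_K e‖_L ≤ γ_p |||e||| + γ_d |e|_nc` where `e := E − E_h`. -/
theorem bound_on_theta_zero
    {L M : Type*} [NormedAddCommGroup L] [InnerProductSpace ℝ L]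
    [NormedAddCommGroup M] [InnerProductSpace ℝ M]
    (ω : ℝ) (hω : 0 < ω)
    (Vs V Vh : Submodule ℝ L) (hVVs : V ≤ Vs) (hVhVs : Vh ≤ Vs)
    (C : L →ₗ[ℝ] M)
    (s : L →ₗ[ℝ] L →ₗ[ℝ] ℝ)
    (hs_symm : ∀ v w : L, s v w = s w v)
    (hs_pos : ∀ v : L, 0 ≤ s v v)
    (hs_conf : ∀ v w : L, v ∈ V ∨ w ∈ V → s v w = 0)
    (nc : L → ℝ)
    (hnc_nonneg : ∀ v : L, 0 ≤ nc v)
    (hnc_add : ∀ v w : L, nc (v + w) ≤ nc v + nc w)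
    (hnc_smul : ∀ (c : ℝ) (v : L), nc (c • v) = |c| * nc v)
    (hnc_conf : ∀ v ∈ V, nc v = 0)
    (projK : L →ₗ[ℝ] L)
    (hprojK_mem : ∀ v : L, projK v ∈ V ∧ C (projK v) = 0)
    (hprojK_orth : ∀ v : L, ∀ w ∈ V, C w = 0 → ⟪v - projK v, w⟫ = 0)
    (γp γd : ℝ) (hγp : 0 ≤ γp) (hγd : 0 ≤ γd)
    (hadj : ∀ θ : L, (∀ w ∈ V, C w = 0 → ⟪θ, w⟫ = 0) →
      ∃ ζ ∈ V, (∀ w ∈ V, -ω ^ 2 * ⟪w, ζ⟫ + ⟪C w, C ζ⟫ = ⟪w, θ⟫) ∧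
        sInf {t : ℝ | ∃ v ∈ Vh ⊓ V, t = ω * tnorm ω C (ζ - v)} ≤ γp * ‖θ‖ ∧
        ∀ wh ∈ Vh,
          ω * |⟪wh, θ⟫ - (-ω ^ 2 * ⟪wh, ζ⟫ + ⟪C wh, C ζ⟫ + s wh ζ)| ≤
            γd * ‖θ‖ * nc wh)
    (E : L) (hE : E ∈ V) (Eh : L) (hEh : Eh ∈ Vh)
    (hGO : ∀ v ∈ Vh ⊓ V,
      -ω ^ 2 * ⟪E - Eh, v⟫ + ⟪C (E - Eh), C v⟫ + s (E - Eh) v = 0) :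
    ω * ‖(E - Eh) - projK (E - Eh)‖ ≤
      γp * tnorm ω C (E - Eh) + γd * nc (E - Eh) :=
  bound_on_theta_zero_general ω hω V Vh C s hs_conf nc hnc_add hnc_smul hnc_conf projK hprojK_mem
    hprojK_orth γp γd hγp hγd hadj E hE Eh hEh hGO
end

section
/- Assume V_h is finite-dimensional and that c_γ := 8 max(γ_p², ρ⁻² γ_d²) + max(1, ρ⁻²)(γ_div + 3 γ_div²) < 1. Then the discrete problem is well-posed: for every linear functional F : V_h → ℝ there exists a unique E_h ∈ V_h such that b♯(E_h, w_h) = F(w_h) for all w_h ∈ V_h. In particular, the only E_h ∈ V_h with b♯(E_h, w_h) = 0 for all w_h ∈ V_h is E_h = 0. -/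
/-!
A square finite-dimensional system is uniquely solvable as soon as its homogeneous version has
only the trivial solution, so let `E ∈ V_h` satisfy `b♯(E, ·) = 0` on `V_h`. Testing with `E`
gives `‖C E‖² + s(E, E) = ω²‖E‖²`, and testing with `Π_{K_h} E ∈ V_h ∩ V` gives
`Π_{K_h} E = 0`, so the divergence-conformity bound controls `ω‖Π_K E‖`. The remainder
`θ = E - Π_K E` is `L`-orthogonal to `K`; testing `(E, θ)_L = ‖θ‖²` against the adjoint solution
`ζ` with datum `θ`, Galerkin orthogonality against `V_h ∩ V` and the approximation property of
`ζ` give `ω‖θ‖ ≤ γ_d |E|_nc + γ_p |||E|||`. Since `‖E‖² = ‖Π_K E‖² + ‖θ‖²`, the two bounds yield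
`ω²‖E‖² ≤ c_γ ω²‖E‖²`, hence `E = 0` because `c_γ < 1`.
-/

open scoped RealInnerProductSpace

theorem LinearMap.BilinForm.existsUnique_apply_eq_of_separatingLeft {K V : Type*} [Field K]
    [AddCommGroup V] [Module K V] [FiniteDimensional K V] {B : LinearMap.BilinForm K V}
    (hB : B.SeparatingLeft) (F : Module.Dual K V) : ∃! x : V, ∀ y, B x y = F y := by
  have hB' : B.Nondegenerate := .ofSeparatingLeft hB
  refine ⟨(B.toDual hB').symm F, fun y ↦ ?_, fun x hx ↦ ?_⟩
  · rw [← toDual_def hB', LinearEquiv.apply_symm_apply]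
  · rw [LinearEquiv.eq_symm_apply]
    exact LinearMap.ext hx

lemma mul_add_mul_le_sqrt_mul_sqrt_s9 (p q r t : ℝ) :
    p * q + r * t ≤ √(p ^ 2 + r ^ 2) * √(q ^ 2 + t ^ 2) := by
  rw [← Real.sqrt_mul (by positivity)]
  apply Real.le_sqrt_of_sq_le
  nlinarith [sq_nonneg (p * t - r * q)]

lemma le_mul_csInf_of_forall_le_mul {S : Set ℝ} {x a : ℝ} (hS : S.Nonempty) (ha : 0 ≤ a)
    (h : ∀ t ∈ S, x ≤ a * t) : x ≤ a * sInf S := by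
  rw [← smul_eq_mul, ← Real.sInf_smul_of_nonneg ha]
  refine le_csInf hS.smul_set ?_
  rintro _ ⟨t, ht, rfl⟩
  exact h t ht

lemma sq_le_sq_of_mul_sq_le_mul {a x R : ℝ} (ha : 0 ≤ a) (hx : 0 ≤ x) (h : a * x ^ 2 ≤ x * R) :
    (a * x) ^ 2 ≤ R ^ 2 := by
  rcases hx.eq_or_lt with rfl | hx
  · simp [sq_nonneg]
  · have : a * x ≤ R := le_of_mul_le_mul_left (by linarith) hx
    exact pow_le_pow_left₀ (by positivity) this 2

lemma sq_le_inv_sq_mul_of_mul_le_sqrt {ρ n σ : ℝ} (hρ : 0 < ρ) (hn : 0 ≤ n) (hσ : 0 ≤ σ)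
    (h : ρ * n ≤ √σ) : n ^ 2 ≤ ρ⁻¹ ^ 2 * σ := by
  have h2 := pow_le_pow_left₀ (mul_nonneg hρ.le hn) h 2
  rw [Real.sq_sqrt hσ] at h2
  calc n ^ 2 = ρ⁻¹ ^ 2 * (ρ * n) ^ 2 := by field_simp
    _ ≤ ρ⁻¹ ^ 2 * σ := by gcongr

-- In the application `e = ω²‖E‖²`, `c = ‖C E‖²`, `σ = s(E, E)`, `n = |E|_nc`,
-- `k = ω²‖Π_K E‖²`, `t = ω²‖E - Π_K E‖²` and `T = |||E|||`.
lemma nonpos_of_energy_estimates {γp γd γdiv ρi e c σ n k t T : ℝ} (hγdiv : 0 ≤ γdiv)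
    (hc : 0 ≤ c) (hσ : 0 ≤ σ) (henergy : c + σ = e) (hsplit : e = k + t)
    (hT : T ^ 2 = e + c) (hn : n ^ 2 ≤ ρi * σ) (hk : k ≤ γdiv ^ 2 * (c + n ^ 2))
    (ht : t ≤ (γd * n + γp * T) ^ 2)
    (hcγ : 8 * max (γp ^ 2) (ρi * γd ^ 2) + max 1 ρi * (γdiv + 3 * γdiv ^ 2) < 1) :
    e ≤ 0 := by
  set m₁ := max (γp ^ 2) (ρi * γd ^ 2)
  set m₂ := max 1 ρi
  have hm₁p : γp ^ 2 ≤ m₁ := le_max_left _ _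
  have hm₁d : ρi * γd ^ 2 ≤ m₁ := le_max_right _ _
  have hm₂ : 1 ≤ m₂ := le_max_left _ _
  have hm₂ρ : ρi ≤ m₂ := le_max_right _ _
  have he : 0 ≤ e := by linarith
  have hdn : γd ^ 2 * n ^ 2 ≤ m₁ * e := by
    nlinarith [mul_le_mul_of_nonneg_left hn (sq_nonneg γd), mul_le_mul_of_nonneg_right hm₁d hσ]
  have hpT : γp ^ 2 * T ^ 2 ≤ m₁ * (2 * e) := by
    nlinarith [mul_le_mul_of_nonneg_right hm₁p (sq_nonneg T)]
  have ht' : t ≤ 8 * m₁ * e := by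
    nlinarith [sq_nonneg (γd * n - γp * T), mul_nonneg (le_trans (sq_nonneg γp) hm₁p) he]
  have hk' : k ≤ m₂ * (γdiv + 3 * γdiv ^ 2) * e := by
    have hcn : c + n ^ 2 ≤ m₂ * e := by nlinarith [mul_le_mul_of_nonneg_right hm₂ρ hσ]
    nlinarith [mul_le_mul_of_nonneg_left hcn (sq_nonneg γdiv), mul_nonneg (by linarith : 0 ≤ m₂) he]
  by_contra! hpos
  nlinarith [mul_lt_mul_of_pos_right hcγ hpos]

section StabilizedForm

variable {L M : Type*} [NormedAddCommGroup L] [InnerProductSpace ℝ L]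
  [NormedAddCommGroup M] [InnerProductSpace ℝ M] {ω : ℝ} {C : L →ₗ[ℝ] M}
  {s : L →ₗ[ℝ] L →ₗ[ℝ] ℝ} {V Vh : Submodule ℝ L}

lemma tnorm_sq (v : L) : tnorm ω C v ^ 2 = ω ^ 2 * ‖v‖ ^ 2 + ‖C v‖ ^ 2 :=
  Real.sq_sqrt (by positivity)

lemma abs_neg_mul_inner_add_inner_le_tnorm_mul_tnorm (v w : L) :
    |-ω ^ 2 * ⟪v, w⟫ + ⟪C v, C w⟫| ≤ tnorm ω C v * tnorm ω C w :=
  calc |-ω ^ 2 * ⟪v, w⟫ + ⟪C v, C w⟫|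
      ≤ ω ^ 2 * |⟪v, w⟫| + |⟪C v, C w⟫| := by
        refine (abs_add_le _ _).trans_eq ?_
        rw [abs_mul, abs_neg, abs_of_nonneg (sq_nonneg ω)]
    _ ≤ ω ^ 2 * (‖v‖ * ‖w‖) + ‖C v‖ * ‖C w‖ := by
        gcongr <;> exact abs_real_inner_le_norm _ _
    _ = ω * ‖v‖ * (ω * ‖w‖) + ‖C v‖ * ‖C w‖ := by ring
    _ ≤ tnorm ω C v * tnorm ω C w := by
        simpa only [tnorm, mul_pow] using
          mul_add_mul_le_sqrt_mul_sqrt_s9 (ω * ‖v‖) (ω * ‖w‖) ‖C v‖ ‖C w‖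

noncomputable def bSharp (ω : ℝ) (C : L →ₗ[ℝ] M) (s : L →ₗ[ℝ] L →ₗ[ℝ] ℝ) :
    LinearMap.BilinForm ℝ L :=
  -(ω ^ 2) • innerₗ L + (innerₗ M).compl₁₂ C C + s

lemma bSharp_apply (v w : L) :
    bSharp ω C s v w = -ω ^ 2 * ⟪v, w⟫ + ⟪C v, C w⟫ + s v w := by
  simp [bSharp]

lemma bSharp_apply_of_mem (hs : ∀ v w : L, v ∈ V ∨ w ∈ V → s v w = 0) (v : L) {w : L}
    (hw : w ∈ V) : bSharp ω C s v w = -ω ^ 2 * ⟪v, w⟫ + ⟪C v, C w⟫ := by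
  rw [bSharp_apply, hs v w (.inr hw), add_zero]

lemma inner_eq_zero_of_bSharp_eq_zero (hω : ω ≠ 0)
    (hs : ∀ v w : L, v ∈ V ∨ w ∈ V → s v w = 0) {v w : L} (hw : w ∈ V) (hCw : C w = 0)
    (h : bSharp ω C s v w = 0) : ⟪v, w⟫ = 0 := by
  rw [bSharp_apply_of_mem hs v hw, hCw, inner_zero_right, add_zero] at h
  simpa [hω] using h

lemma apply_eq_zero_of_forall_bSharp_eq_zero (hω : ω ≠ 0)
    (hs : ∀ v w : L, v ∈ V ∨ w ∈ V → s v w = 0) {projKh : L →ₗ[ℝ] L}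
    (hprojKh_mem : ∀ v : L, projKh v ∈ Vh ⊓ V ∧ C (projKh v) = 0)
    (hprojKh_orth : ∀ v : L, ∀ w ∈ Vh ⊓ V, C w = 0 → ⟪v - projKh v, w⟫ = 0) {E : L}
    (hE : ∀ w ∈ Vh, bSharp ω C s E w = 0) : projKh E = 0 := by
  obtain ⟨hp, hCp⟩ := hprojKh_mem E
  have h := hprojKh_orth E _ hp hCp
  rw [inner_sub_left, inner_eq_zero_of_bSharp_eq_zero hω hs (Submodule.mem_inf.1 hp).2
    hCp (hE _ (Submodule.mem_inf.1 hp).1), zero_sub, neg_eq_zero] at h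
  exact inner_self_eq_zero.1 h

lemma mul_abs_bSharp_le_tnorm_mul_sInf (hω : 0 ≤ ω)
    (hs : ∀ v w : L, v ∈ V ∨ w ∈ V → s v w = 0) {E ζ : L}
    (hE : ∀ w ∈ Vh, bSharp ω C s E w = 0) (hζ : ζ ∈ V) :
    ω * |bSharp ω C s E ζ| ≤
      tnorm ω C E * sInf {t : ℝ | ∃ v ∈ Vh ⊓ V, t = ω * tnorm ω C (ζ - v)} := by
  refine le_mul_csInf_of_forall_le_mul ⟨_, 0, zero_mem _, rfl⟩ (Real.sqrt_nonneg _) ?_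
  rintro _ ⟨v, hv, rfl⟩
  have hζv : bSharp ω C s E ζ = -ω ^ 2 * ⟪E, ζ - v⟫ + ⟪C E, C (ζ - v)⟫ := by
    rw [← bSharp_apply_of_mem hs E (V.sub_mem hζ (Submodule.mem_inf.1 hv).2), map_sub,
      hE v (Submodule.mem_inf.1 hv).1, sub_zero]
  rw [hζv, mul_left_comm]
  exact mul_le_mul_of_nonneg_left (abs_neg_mul_inner_add_inner_le_tnorm_mul_tnorm E _) hω

lemma mul_inner_le_of_adjoint_bounds (hω : 0 ≤ ω)
    (hs : ∀ v w : L, v ∈ V ∨ w ∈ V → s v w = 0) {nc : L → ℝ} {γp γd : ℝ} {E θ ζ : L}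
    (hE : ∀ w ∈ Vh, bSharp ω C s E w = 0) (hζ : ζ ∈ V)
    (hζp : sInf {t : ℝ | ∃ v ∈ Vh ⊓ V, t = ω * tnorm ω C (ζ - v)} ≤ γp * ‖θ‖)
    (hζd : ω * |⟪E, θ⟫ - bSharp ω C s E ζ| ≤ γd * ‖θ‖ * nc E) :
    ω * ⟪E, θ⟫ ≤ ‖θ‖ * (γd * nc E + γp * tnorm ω C E) :=
  calc ω * ⟪E, θ⟫
      ≤ ω * |⟪E, θ⟫ - bSharp ω C s E ζ| + ω * |bSharp ω C s E ζ| := by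
        rw [← mul_add]
        refine mul_le_mul_of_nonneg_left ?_ hω
        linarith [le_abs_self (⟪E, θ⟫ - bSharp ω C s E ζ), le_abs_self (bSharp ω C s E ζ)]
    _ ≤ γd * ‖θ‖ * nc E + tnorm ω C E * (γp * ‖θ‖) := by
        exact add_le_add hζd ((mul_abs_bSharp_le_tnorm_mul_sInf hω hs hE hζ).trans
          (mul_le_mul_of_nonneg_left hζp (Real.sqrt_nonneg _)))
    _ = ‖θ‖ * (γd * nc E + γp * tnorm ω C E) := by ring

theorem eq_zero_of_forall_bSharp_eq_zero (hω : 0 < ω) (hs_pos : ∀ v : L, 0 ≤ s v v)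
    (hs : ∀ v w : L, v ∈ V ∨ w ∈ V → s v w = 0) {nc : L → ℝ} (hnc : ∀ v : L, 0 ≤ nc v)
    {projK : L →ₗ[ℝ] L} (hprojK_mem : ∀ v : L, projK v ∈ V ∧ C (projK v) = 0)
    (hprojK_orth : ∀ v : L, ∀ w ∈ V, C w = 0 → ⟪v - projK v, w⟫ = 0)
    {projKh : L →ₗ[ℝ] L} (hprojKh_mem : ∀ v : L, projKh v ∈ Vh ⊓ V ∧ C (projKh v) = 0)
    (hprojKh_orth : ∀ v : L, ∀ w ∈ Vh ⊓ V, C w = 0 → ⟪v - projKh v, w⟫ = 0) {γp γd : ℝ}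
    (hadj : ∀ θ : L, (∀ w ∈ V, C w = 0 → ⟪θ, w⟫ = 0) →
      ∃ ζ ∈ V, sInf {t : ℝ | ∃ v ∈ Vh ⊓ V, t = ω * tnorm ω C (ζ - v)} ≤ γp * ‖θ‖ ∧
        ∀ wh ∈ Vh, ω * |⟪wh, θ⟫ - bSharp ω C s wh ζ| ≤ γd * ‖θ‖ * nc wh)
    {γdiv : ℝ} (hγdiv : 0 ≤ γdiv)
    (hdiv : ∀ vh ∈ Vh, projKh vh = 0 →
      ω * ‖projK vh‖ ≤ γdiv * Real.sqrt (‖C vh‖ ^ 2 + nc vh ^ 2))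
    {ρ : ℝ} (hρ : 0 < ρ) (hρs : ∀ vh ∈ Vh, ρ * nc vh ≤ Real.sqrt (s vh vh))
    (hcγ : 8 * max (γp ^ 2) (ρ⁻¹ ^ 2 * γd ^ 2) + max 1 (ρ⁻¹ ^ 2) * (γdiv + 3 * γdiv ^ 2) < 1)
    {E : L} (hEVh : E ∈ Vh) (hE : ∀ w ∈ Vh, bSharp ω C s E w = 0) : E = 0 := by
  have hKh : projKh E = 0 :=
    apply_eq_zero_of_forall_bSharp_eq_zero hω.ne' hs hprojKh_mem hprojKh_orth hE
  set θ := E - projK E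
  obtain ⟨hKV, hCK⟩ := hprojK_mem E
  have hKθ : ⟪projK E, θ⟫ = 0 := by
    rw [real_inner_comm]
    exact hprojK_orth E _ hKV hCK
  have hsplit : projK E + θ = E := add_sub_cancel _ _
  have hpyth : ‖E‖ ^ 2 = ‖projK E‖ ^ 2 + ‖θ‖ ^ 2 := by
    simpa [hsplit, hKθ] using norm_add_sq_real (projK E) θ
  have hEθ : ⟪E, θ⟫ = ‖θ‖ ^ 2 :=
    calc ⟪E, θ⟫ = ⟪projK E + θ, θ⟫ := by rw [hsplit]
      _ = ‖θ‖ ^ 2 := by rw [inner_add_left, hKθ, zero_add, real_inner_self_eq_norm_sq]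
  obtain ⟨ζ, hζV, hζp, hζd⟩ := hadj θ (hprojK_orth E)
  have hθ : (ω * ‖θ‖) ^ 2 ≤ (γd * nc E + γp * tnorm ω C E) ^ 2 :=
    sq_le_sq_of_mul_sq_le_mul hω.le (norm_nonneg θ)
      (hEθ ▸ mul_inner_le_of_adjoint_bounds hω.le hs hE hζV hζp (hζd E hEVh))
  have hK : (ω * ‖projK E‖) ^ 2 ≤ γdiv ^ 2 * (‖C E‖ ^ 2 + nc E ^ 2) := by
    have h := pow_le_pow_left₀ (by positivity) (hdiv E hEVh hKh) 2
    rwa [mul_pow γdiv, Real.sq_sqrt (by positivity)] at h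
  have henergy : ‖C E‖ ^ 2 + s E E = ω ^ 2 * ‖E‖ ^ 2 := by
    have h := hE E hEVh
    rw [bSharp_apply, real_inner_self_eq_norm_sq, real_inner_self_eq_norm_sq] at h
    linarith
  have hncE : nc E ^ 2 ≤ ρ⁻¹ ^ 2 * s E E :=
    sq_le_inv_sq_mul_of_mul_le_sqrt hρ (hnc E) (hs_pos E) (hρs E hEVh)
  have hE0 : ω ^ 2 * ‖E‖ ^ 2 ≤ 0 :=
    nonpos_of_energy_estimates hγdiv (sq_nonneg _) (hs_pos E) henergy
      (by rw [mul_pow, mul_pow, hpyth]; ring) (tnorm_sq E) hncE hK hθ hcγ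
  simpa [hω.ne'] using hE0.antisymm (by positivity)

end StabilizedForm

theorem discrete_well_posedness_general
    {L M : Type*} [NormedAddCommGroup L] [InnerProductSpace ℝ L]
    [NormedAddCommGroup M] [InnerProductSpace ℝ M]
    (ω : ℝ) (hω : 0 < ω)
    (V Vh : Submodule ℝ L)
    [FiniteDimensional ℝ Vh]
    (C : L →ₗ[ℝ] M)
    (s : L →ₗ[ℝ] L →ₗ[ℝ] ℝ)
    (hs_pos : ∀ v : L, 0 ≤ s v v)
    (hs_conf : ∀ v w : L, v ∈ V ∨ w ∈ V → s v w = 0)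
    (nc : L → ℝ)
    (hnc_nonneg : ∀ v : L, 0 ≤ nc v)
    (projK : L →ₗ[ℝ] L)
    (hprojK_mem : ∀ v : L, projK v ∈ V ∧ C (projK v) = 0)
    (hprojK_orth : ∀ v : L, ∀ w ∈ V, C w = 0 → ⟪v - projK v, w⟫ = 0)
    (projKh : L →ₗ[ℝ] L)
    (hprojKh_mem : ∀ v : L, projKh v ∈ Vh ⊓ V ∧ C (projKh v) = 0)
    (hprojKh_orth : ∀ v : L, ∀ w ∈ Vh ⊓ V, C w = 0 → ⟪v - projKh v, w⟫ = 0)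
    (γp γd : ℝ)
    (hadj : ∀ θ : L, (∀ w ∈ V, C w = 0 → ⟪θ, w⟫ = 0) →
      ∃ ζ ∈ V, (∀ w ∈ V, -ω ^ 2 * ⟪w, ζ⟫ + ⟪C w, C ζ⟫ = ⟪w, θ⟫) ∧
        sInf {t : ℝ | ∃ v ∈ Vh ⊓ V, t = ω * tnorm ω C (ζ - v)} ≤ γp * ‖θ‖ ∧
        ∀ wh ∈ Vh,
          ω * |⟪wh, θ⟫ - (-ω ^ 2 * ⟪wh, ζ⟫ + ⟪C wh, C ζ⟫ + s wh ζ)| ≤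
            γd * ‖θ‖ * nc wh)
    (γdiv : ℝ) (hγdiv : 0 ≤ γdiv)
    (hdiv : ∀ vh ∈ Vh, projKh vh = 0 →
      ω * ‖projK vh‖ ≤ γdiv * Real.sqrt (‖C vh‖ ^ 2 + nc vh ^ 2))
    (ρ : ℝ) (hρ : 0 < ρ)
    (hρs : ∀ vh ∈ Vh, ρ * nc vh ≤ Real.sqrt (s vh vh))
    (hcγ : 8 * max (γp ^ 2) (ρ⁻¹ ^ 2 * γd ^ 2) +
        max 1 (ρ⁻¹ ^ 2) * (γdiv + 3 * γdiv ^ 2) < 1) :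
    (∀ F : Vh →ₗ[ℝ] ℝ, ∃! Eh : Vh, ∀ wh : Vh,
      -ω ^ 2 * ⟪(Eh : L), (wh : L)⟫ + ⟪C (Eh : L), C (wh : L)⟫ +
        s (Eh : L) (wh : L) = F wh) ∧
    (∀ Eh ∈ Vh, (∀ wh ∈ Vh,
        -ω ^ 2 * ⟪Eh, wh⟫ + ⟪C Eh, C wh⟫ + s Eh wh = 0) → Eh = 0) := by
  have hker : ∀ Eh ∈ Vh, (∀ wh ∈ Vh,
      -ω ^ 2 * ⟪Eh, wh⟫ + ⟪C Eh, C wh⟫ + s Eh wh = 0) → Eh = 0 := by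
    refine fun Eh hEh h0 ↦ eq_zero_of_forall_bSharp_eq_zero hω hs_pos hs_conf hnc_nonneg
      hprojK_mem hprojK_orth hprojKh_mem hprojKh_orth (fun θ hθ ↦ ?_) hγdiv hdiv hρ hρs hcγ hEh
      (by simpa only [bSharp_apply] using h0)
    obtain ⟨ζ, hζ, -, hζp, hζd⟩ := hadj θ hθ
    exact ⟨ζ, hζ, hζp, by simpa only [bSharp_apply] using hζd⟩
  refine ⟨fun F ↦ ?_, hker⟩
  have hsep : ((bSharp ω C s).domRestrict₁₂ Vh Vh).SeparatingLeft := fun Eh h0 ↦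
    Subtype.ext <| hker Eh Eh.2 fun wh hwh ↦ by
      simpa only [LinearMap.domRestrict₁₂_apply, bSharp_apply] using h0 ⟨wh, hwh⟩
  simpa only [LinearMap.domRestrict₁₂_apply, bSharp_apply] using
    LinearMap.BilinForm.existsUnique_apply_eq_of_separatingLeft hsep F

/-- **Well-posedness of the discrete problem.**
If `V_h` is finite-dimensional and
`c_γ := 8 max(γ_p², ρ⁻² γ_d²) + max(1, ρ⁻²)(γ_div + 3 γ_div²) < 1`, then for every
linear functional `F : V_h → ℝ` there is a unique `E_h ∈ V_h` with
`b♯(E_h, w_h) = F(w_h)` for all `w_h ∈ V_h`; in particular the only `E_h ∈ V_h` with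
`b♯(E_h, ·) = 0` on `V_h` is `E_h = 0`. -/
theorem discrete_well_posedness
    {L M : Type*} [NormedAddCommGroup L] [InnerProductSpace ℝ L]
    [NormedAddCommGroup M] [InnerProductSpace ℝ M]
    (ω : ℝ) (hω : 0 < ω)
    (Vs V Vh : Submodule ℝ L) (hVVs : V ≤ Vs) (hVhVs : Vh ≤ Vs)
    [FiniteDimensional ℝ Vh]
    (C : L →ₗ[ℝ] M)
    (s : L →ₗ[ℝ] L →ₗ[ℝ] ℝ)
    (hs_symm : ∀ v w : L, s v w = s w v)
    (hs_pos : ∀ v : L, 0 ≤ s v v)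
    (hs_conf : ∀ v w : L, v ∈ V ∨ w ∈ V → s v w = 0)
    (nc : L → ℝ)
    (hnc_nonneg : ∀ v : L, 0 ≤ nc v)
    (hnc_add : ∀ v w : L, nc (v + w) ≤ nc v + nc w)
    (hnc_smul : ∀ (c : ℝ) (v : L), nc (c • v) = |c| * nc v)
    (hnc_conf : ∀ v ∈ V, nc v = 0)
    (projK : L →ₗ[ℝ] L)
    (hprojK_mem : ∀ v : L, projK v ∈ V ∧ C (projK v) = 0)
    (hprojK_orth : ∀ v : L, ∀ w ∈ V, C w = 0 → ⟪v - projK v, w⟫ = 0)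
    (projKh : L →ₗ[ℝ] L)
    (hprojKh_mem : ∀ v : L, projKh v ∈ Vh ⊓ V ∧ C (projKh v) = 0)
    (hprojKh_orth : ∀ v : L, ∀ w ∈ Vh ⊓ V, C w = 0 → ⟪v - projKh v, w⟫ = 0)
    (γp γd : ℝ) (hγp : 0 ≤ γp) (hγd : 0 ≤ γd)
    (hadj : ∀ θ : L, (∀ w ∈ V, C w = 0 → ⟪θ, w⟫ = 0) →
      ∃ ζ ∈ V, (∀ w ∈ V, -ω ^ 2 * ⟪w, ζ⟫ + ⟪C w, C ζ⟫ = ⟪w, θ⟫) ∧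
        sInf {t : ℝ | ∃ v ∈ Vh ⊓ V, t = ω * tnorm ω C (ζ - v)} ≤ γp * ‖θ‖ ∧
        ∀ wh ∈ Vh,
          ω * |⟪wh, θ⟫ - (-ω ^ 2 * ⟪wh, ζ⟫ + ⟪C wh, C ζ⟫ + s wh ζ)| ≤
            γd * ‖θ‖ * nc wh)
    (γdiv : ℝ) (hγdiv : 0 ≤ γdiv)
    (hdiv : ∀ vh ∈ Vh, projKh vh = 0 →
      ω * ‖projK vh‖ ≤ γdiv * Real.sqrt (‖C vh‖ ^ 2 + nc vh ^ 2))
    (P : L →ₗ[ℝ] L)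
    (hP_mem : ∀ v : L, P v ∈ Vh)
    (hP_orth : ∀ v : L, ∀ wh ∈ Vh,
      ω ^ 2 * ⟪v - P v, wh⟫ + ⟪C (v - P v), C wh⟫ + s (v - P v) wh = 0)
    (ρ : ℝ) (hρ : 0 < ρ)
    (hρs : ∀ vh ∈ Vh, ρ * nc vh ≤ Real.sqrt (s vh vh))
    (hcγ : 8 * max (γp ^ 2) (ρ⁻¹ ^ 2 * γd ^ 2) +
        max 1 (ρ⁻¹ ^ 2) * (γdiv + 3 * γdiv ^ 2) < 1) :
    (∀ F : Vh →ₗ[ℝ] ℝ, ∃! Eh : Vh, ∀ wh : Vh,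
      -ω ^ 2 * ⟪(Eh : L), (wh : L)⟫ + ⟪C (Eh : L), C (wh : L)⟫ +
        s (Eh : L) (wh : L) = F wh) ∧
    (∀ Eh ∈ Vh, (∀ wh ∈ Vh,
        -ω ^ 2 * ⟪Eh, wh⟫ + ⟪C Eh, C wh⟫ + s Eh wh = 0) → Eh = 0) :=
  discrete_well_posedness_general ω hω V Vh C s hs_pos hs_conf nc hnc_nonneg projK hprojK_mem
    hprojK_orth projKh hprojKh_mem hprojKh_orth γp γd hadj γdiv hγdiv hdiv ρ hρ hρs hcγ
end
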